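/- arXiv:2110.13568 — 3 statements merged into one kernel-verified Lean document; each statement's English description precedes it below -/
import Mathlib

section
/- Let k be a positive multiple of 4 and v ∈ C^n, and define α_k(v) = inf{ Σ_{j=0}^{k-1} ‖v_j‖_2 : v = Σ_{j=0}^{k-1} e^{2πij/k} v_j, each v_j entrywise real and non-negative }. Then α_k(v)/(1 + 10 sin(π/(2k))) ≤ ‖v‖_1^N ≤ α_k(v). -/
open Matrix BigOperators
open scoped ComplexOrder

namespace CPCPPaper

/-- A matrix is a *completely positive (CP) matrix* if it is a finite sum of outer products
`x xᵀ` of entrywise non-negative vectors. Here `0 ≤ z` in `ℂ` means that `z` is real and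
non-negative. -/
def IsCPMatrix {ι : Type*} [Fintype ι] (X : Matrix ι ι ℂ) : Prop :=
  ∃ (k : ℕ) (v : Fin k → ι → ℂ),
    (∀ j i, 0 ≤ v j i) ∧ X = ∑ j, Matrix.vecMulVec (v j) (v j)

/-- The CP-rank of a matrix: the minimal number of terms in a decomposition as a sum of
outer products of entrywise non-negative vectors. -/
noncomputable def cpRank {ι : Type*} [Fintype ι] (X : Matrix ι ι ℂ) : ℕ :=
  sInf {k : ℕ | ∃ v : Fin k → ι → ℂ,
    (∀ j i, 0 ≤ v j i) ∧ X = ∑ j, Matrix.vecMulVec (v j) (v j)}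

/-- A matrix is *doubly non-negative (DNN)* if it is positive semidefinite and all of its
entries are real and non-negative. -/
def IsDNNMatrix {ι : Type*} [Fintype ι] (X : Matrix ι ι ℂ) : Prop :=
  X.PosSemidef ∧ ∀ i j, 0 ≤ X i j

/-- The blockwise extension `I_k ⊗ Φ` of a map `Φ : M_n → M_m`. -/
def tensorExt {n m : ℕ} (k : ℕ)
    (Φ : Matrix (Fin n) (Fin n) ℂ → Matrix (Fin m) (Fin m) ℂ)
    (X : Matrix (Fin k × Fin n) (Fin k × Fin n) ℂ) :
    Matrix (Fin k × Fin m) (Fin k × Fin m) ℂ :=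
  Matrix.of fun p q => Φ (Matrix.of fun i j => X (p.1, i) (q.1, j)) p.2 q.2

/-- `Φ` is *completely positive completely positive (CPCP)* if `I_k ⊗ Φ` sends CP matrices
to CP matrices for every `k`. -/
def IsCPCP {n m : ℕ} (Φ : Matrix (Fin n) (Fin n) ℂ → Matrix (Fin m) (Fin m) ℂ) : Prop :=
  ∀ (k : ℕ) (X : Matrix (Fin k × Fin n) (Fin k × Fin n) ℂ),
    IsCPMatrix X → IsCPMatrix (tensorExt k Φ X)

/-- `Φ` is *completely positive doubly non-negative (CPDNN)* if `I_k ⊗ Φ` sends DNN matrices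
to DNN matrices for every `k`. -/
def IsCPDNN {n m : ℕ} (Φ : Matrix (Fin n) (Fin n) ℂ → Matrix (Fin m) (Fin m) ℂ) : Prop :=
  ∀ (k : ℕ) (X : Matrix (Fin k × Fin n) (Fin k × Fin n) ℂ),
    IsDNNMatrix X → IsDNNMatrix (tensorExt k Φ X)

/-- `Φ` is a *completely positive map* (in the superoperator sense) if `I_k ⊗ Φ` sends
positive semidefinite matrices to positive semidefinite matrices for every `k`. -/
def IsCPMap {n m : ℕ} (Φ : Matrix (Fin n) (Fin n) ℂ → Matrix (Fin m) (Fin m) ℂ) : Prop :=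
  ∀ (k : ℕ) (X : Matrix (Fin k × Fin n) (Fin k × Fin n) ℂ),
    X.PosSemidef → (tensorExt k Φ X).PosSemidef

/-- `Φ` is trace-preserving. -/
def IsTracePreserving {n m : ℕ}
    (Φ : Matrix (Fin n) (Fin n) ℂ → Matrix (Fin m) (Fin m) ℂ) : Prop :=
  ∀ X, (Φ X).trace = X.trace

/-- The Choi matrix `J(Φ) = ∑ᵢⱼ |i⟩⟨j| ⊗ Φ(|i⟩⟨j|)`. -/
def choiMatrix {n m : ℕ}
    (Φ : Matrix (Fin n) (Fin n) ℂ → Matrix (Fin m) (Fin m) ℂ) :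
    Matrix (Fin n × Fin m) (Fin n × Fin m) ℂ :=
  Matrix.of fun p q => Φ (Matrix.single p.1 q.1 1) p.2 q.2

/-- A *CP state*: a completely positive matrix with trace one. -/
def IsCPState {n : ℕ} (ρ : Matrix (Fin n) (Fin n) ℂ) : Prop :=
  IsCPMatrix ρ ∧ ρ.trace = 1

/-- `Φ` is *CP-preserving* if it maps CP states to CP states. -/
def IsCPPreserving {n m : ℕ}
    (Φ : Matrix (Fin n) (Fin n) ℂ → Matrix (Fin m) (Fin m) ℂ) : Prop :=
  ∀ ρ, IsCPState ρ → IsCPState (Φ ρ)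

/-- The Pauli matrix `X`. -/
def PauliX : Matrix (Fin 2) (Fin 2) ℂ := !![0, 1; 1, 0]

/-- The Pauli matrix `Y`. -/
def PauliY : Matrix (Fin 2) (Fin 2) ℂ := !![0, -Complex.I; Complex.I, 0]

/-- The Pauli matrix `Z`. -/
def PauliZ : Matrix (Fin 2) (Fin 2) ℂ := !![1, 0; 0, -1]

/-- The permutation matrix associated to a permutation. -/
def permMat {n : ℕ} (σ : Equiv.Perm (Fin n)) : Matrix (Fin n) (Fin n) ℂ :=
  Matrix.of fun i j => if i = σ j then 1 else 0

/-- The 1-norm of non-negativity of a complex vector. -/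
noncomputable def nnNorm1 {n : ℕ} (v : Fin n → ℂ) : ℝ :=
  sInf {s : ℝ | ∃ (k : ℕ) (c : Fin k → ℂ) (w : Fin k → Fin n → ℂ),
    (∀ j, ‖c j‖ = 1) ∧ (∀ j i, 0 ≤ w j i) ∧ (v = ∑ j, c j • w j) ∧
    s = ∑ j, Real.sqrt (∑ i, Complex.normSq (w j i))}

/-- The value `α_k(v)` of the net-based SDP relaxation: the infimal total norm of a
decomposition of `v` using the `k`-th roots of unity as phases. -/
noncomputable def alphaK {n : ℕ} (k : ℕ) (v : Fin n → ℂ) : ℝ :=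
  sInf {s : ℝ | ∃ w : Fin k → Fin n → ℂ,
    (∀ j i, 0 ≤ w j i) ∧
    (v = ∑ j, Complex.exp (2 * (Real.pi : ℂ) * Complex.I * (j.val : ℂ) / (k : ℂ)) • w j) ∧
    s = ∑ j, Real.sqrt (∑ i, Complex.normSq (w j i))}

noncomputable def rt (k : ℕ) (t : ℤ) : ℂ :=
  Complex.exp (2 * (Real.pi : ℂ) * Complex.I * (t : ℂ) / (k : ℂ))

lemma rt_eq (k : ℕ) (t : ℤ) :
    rt k t = Complex.exp (((2 * Real.pi * t / k : ℝ) : ℂ) * Complex.I) := by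
  unfold rt; congr 1; push_cast; ring

lemma rt_natCast (k a : ℕ) :
    Complex.exp (2 * (Real.pi : ℂ) * Complex.I * (a : ℂ) / (k : ℂ)) = rt k a := by
  unfold rt; norm_cast

lemma rt_add (k : ℕ) (s t : ℤ) : rt k (s + t) = rt k s * rt k t := by
  rw [rt_eq, rt_eq, rt_eq, ← Complex.exp_add]; congr 1; push_cast; ring

lemma rt_zero (k : ℕ) : rt k 0 = 1 := by
  rw [rt_eq]; norm_num

lemma rt_int_mul (k : ℕ) (hk : 0 < k) (m : ℤ) : rt k ((k : ℤ) * m) = 1 := by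
  rw [rt_eq]
  have hkn : (k : ℝ) ≠ 0 := Nat.cast_ne_zero.mpr hk.ne'
  rw [← Complex.exp_int_mul_two_pi_mul_I m]
  congr 1
  push_cast
  field_simp

lemma rt_emod (k : ℕ) (hk : 0 < k) (t : ℤ) : rt k (t % k) = rt k t := by
  conv_rhs => rw [← Int.mul_ediv_add_emod t k]
  rw [rt_add, rt_int_mul k hk, one_mul]

lemma rt_norm (k : ℕ) (t : ℤ) : ‖rt k t‖ = 1 := by
  rw [rt_eq, Complex.norm_exp_ofReal_mul_I]

lemma rt_quarter (k : ℕ) (hk : 0 < k) (h4 : 4 ∣ k) : rt k ((k : ℤ) / 4) = Complex.I := by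
  obtain ⟨m, rfl⟩ := h4
  have hm : 0 < m := by omega
  have h1 : ((4 * m : ℕ) : ℤ) / 4 = (m : ℤ) := by push_cast; omega
  rw [h1, rt_eq]
  have hmr : (m : ℝ) ≠ 0 := Nat.cast_ne_zero.mpr hm.ne'
  have : (2 * Real.pi * (m : ℤ) / (4 * m : ℕ) : ℝ) = Real.pi / 2 := by
    push_cast; field_simp; ring
  rw [this, Complex.exp_mul_I, ← Complex.ofReal_cos, ← Complex.ofReal_sin,
    Real.cos_pi_div_two, Real.sin_pi_div_two]
  simp

lemma rt_neg_quarter (k : ℕ) (hk : 0 < k) (h4 : 4 ∣ k) :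
    rt k (-((k : ℤ) / 4)) = -Complex.I := by
  have h := rt_add k ((k : ℤ) / 4) (-((k : ℤ) / 4))
  rw [add_neg_cancel, rt_zero, rt_quarter k hk h4] at h
  have h2 : Complex.I * 1 = Complex.I * (Complex.I * rt k (-((k : ℤ) / 4))) := by rw [← h]
  rw [← mul_assoc, Complex.I_mul_I] at h2
  linear_combination h2

lemma abs_sin_le (x : ℝ) : |Real.sin x| ≤ |x| := by
  have key : ∀ y : ℝ, 0 ≤ y → |Real.sin y| ≤ y := by
    intro y hy
    rcases le_or_gt y 1 with h | h
    · rw [abs_of_nonneg (Real.sin_nonneg_of_nonneg_of_le_pi hy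
        (h.trans (by linarith [Real.pi_gt_three])))]
      exact Real.sin_le hy
    · exact le_trans (abs_le.mpr ⟨Real.neg_one_le_sin y, Real.sin_le_one y⟩) h.le
  rcases le_or_gt 0 x with h | h
  · rw [abs_of_nonneg h]; exact key x h
  · have := key (-x) (by linarith)
    rw [Real.sin_neg, abs_neg] at this
    rwa [abs_of_neg h]


noncomputable def enorm {n : ℕ} (w : Fin n → ℂ) : ℝ :=
  Real.sqrt (∑ i, Complex.normSq (w i))

lemma enorm_eq_norm {n : ℕ} (w : Fin n → ℂ) :
    enorm w = ‖(WithLp.toLp 2 (w) : EuclideanSpace ℂ (Fin n))‖ := by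
  rw [EuclideanSpace.norm_eq]
  unfold enorm
  congr 1
  apply Finset.sum_congr rfl
  intro i _
  rw [← Complex.sq_norm, PiLp.toLp_apply]

lemma enorm_nonneg {n : ℕ} (w : Fin n → ℂ) : 0 ≤ enorm w := Real.sqrt_nonneg _

lemma enorm_sum_le {n m : ℕ} (g : Fin m → Fin n → ℂ) :
    enorm (∑ j, g j) ≤ ∑ j, enorm (g j) := by
  have h : (WithLp.toLp 2 (∑ j, g j) : EuclideanSpace ℂ (Fin n))
      = ∑ j, (WithLp.toLp 2 (g j) : EuclideanSpace ℂ (Fin n)) := WithLp.toLp_sum _ _ _ _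
  rw [enorm_eq_norm, h]
  calc ‖∑ j, (WithLp.toLp 2 (g j) : EuclideanSpace ℂ (Fin n))‖
      ≤ ∑ j, ‖(WithLp.toLp 2 (g j) : EuclideanSpace ℂ (Fin n))‖ := norm_sum_le _ _
    _ = ∑ j, enorm (g j) := by
        apply Finset.sum_congr rfl; intro j _; rw [enorm_eq_norm]

lemma enorm_smul {n : ℕ} (r : ℝ) (hr : 0 ≤ r) (w : Fin n → ℂ) :
    enorm (((r : ℂ)) • w) = r * enorm w := by
  have h : (WithLp.toLp 2 ((r : ℂ) • w) : EuclideanSpace ℂ (Fin n))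
      = (r : ℂ) • (WithLp.toLp 2 (w) : EuclideanSpace ℂ (Fin n)) := rfl
  rw [enorm_eq_norm, h, norm_smul, enorm_eq_norm]
  simp [abs_of_nonneg hr]

lemma nearest_root (k : ℕ) (hk2 : 2 ≤ k) (c : ℂ) (hc : ‖c‖ = 1) :
    ∃ (a : Fin k) (p q : ℝ), 0 ≤ p ∧ p ≤ 1 ∧ |q| ≤ Real.pi / k ∧
      c = rt k a.val * ((p : ℂ) + (q : ℂ) * Complex.I) := by
  have hk : 0 < k := by omega
  have hkr : (0 : ℝ) < k := by exact_mod_cast hk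
  have hpi := Real.pi_pos
  set θ := c.arg with hθ
  have hcθ : Complex.exp ((θ : ℂ) * Complex.I) = c := by
    have := Complex.norm_mul_exp_arg_mul_I c
    rwa [hc,
      Complex.ofReal_one, one_mul] at this
  set a0 : ℤ := round (θ * k / (2 * Real.pi)) with ha0
  set δ : ℝ := θ - 2 * Real.pi * a0 / k with hδdef
  have hδ : |δ| ≤ Real.pi / k := by
    have h1 : |θ * k / (2 * Real.pi) - a0| ≤ 1 / 2 := abs_sub_round _
    have hkne : (k : ℝ) ≠ 0 := hkr.ne'
    have h2 : δ = (2 * Real.pi / k) * (θ * k / (2 * Real.pi) - a0) := by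
      rw [hδdef]; field_simp
    rw [h2, abs_mul, abs_of_pos (by positivity)]
    calc 2 * Real.pi / k * |θ * k / (2 * Real.pi) - a0|
        ≤ 2 * Real.pi / k * (1 / 2) := by
          apply mul_le_mul_of_nonneg_left h1 (by positivity)
      _ = Real.pi / k := by ring
  have hδ2 : |δ| ≤ Real.pi / 2 := hδ.trans (by
    apply div_le_div_of_nonneg_left hpi.le (by norm_num)
    exact_mod_cast hk2)
  refine ⟨⟨(a0 % k).toNat, ?_⟩, Real.cos δ, Real.sin δ, ?_, Real.cos_le_one δ,
    (abs_sin_le δ).trans hδ, ?_⟩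
  · have h1 : a0 % k < k := Int.emod_lt_of_pos a0 (by exact_mod_cast hk)
    have h2 : 0 ≤ a0 % k := Int.emod_nonneg a0 (by exact_mod_cast hk.ne')
    omega
  · apply Real.cos_nonneg_of_mem_Icc
    constructor
    · linarith [(abs_le.mp hδ2).1]
    · linarith [(abs_le.mp hδ2).2]
  · have hval : (((a0 % k).toNat : ℤ)) = a0 % k := by
      apply Int.toNat_of_nonneg
      exact Int.emod_nonneg a0 (by exact_mod_cast hk.ne')
    show c = rt k (((a0 % k).toNat : ℕ) : ℤ) * _
    rw [hval, rt_emod k hk a0, rt_eq]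
    rw [show ((Real.cos δ : ℂ) + (Real.sin δ : ℂ) * Complex.I)
        = Complex.exp ((δ : ℂ) * Complex.I) from by
      rw [Complex.exp_mul_I, ← Complex.ofReal_cos, ← Complex.ofReal_sin]]
    rw [← Complex.exp_add, ← hcθ]
    congr 1
    push_cast
    have : (δ : ℂ) = (θ : ℂ) - 2 * Real.pi * a0 / k := by
      rw [hδdef]; push_cast; ring
    rw [this]
    ring


lemma pi_div_le (k : ℕ) (hk : 4 ≤ k) :
    Real.pi / k ≤ 10 * Real.sin (Real.pi / (2 * k)) := by
  have hpi := Real.pi_pos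
  have hpilt : Real.pi < 3.15 := by linarith [Real.pi_lt_d2]
  have hkr : (4 : ℝ) ≤ k := by exact_mod_cast hk
  set x := Real.pi / (2 * k) with hx
  have hx0 : 0 < x := by positivity
  have hx1 : x ≤ 1 := by
    rw [hx, div_le_one (by linarith)]
    linarith
  have hs := Real.sin_gt_sub_cube hx0
  have hx3 : x ^ 3 ≤ x := by
    calc x ^ 3 ≤ x ^ 1 := pow_le_pow_of_le_one hx0.le hx1 (by norm_num)
      _ = x := pow_one x
  have h2x : Real.pi / k = 2 * x := by
    rw [hx]; field_simp
  rw [h2x]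
  nlinarith

lemma main_construct {n : ℕ} (k : ℕ) (hk : 0 < k) (h4 : 4 ∣ k) (m : ℕ)
    (c : Fin m → ℂ) (w : Fin m → Fin n → ℂ)
    (hc : ∀ j, ‖c j‖ = 1) (hw : ∀ j i, 0 ≤ w j i) :
    ∃ W : Fin k → Fin n → ℂ, (∀ a i, 0 ≤ W a i) ∧
      (∑ j, c j • w j) = (∑ a : Fin k,
        Complex.exp (2 * (Real.pi : ℂ) * Complex.I * ((a.val : ℕ) : ℂ) / (k : ℂ)) • W a) ∧
      ∑ a, enorm (W a) ≤ (1 + 10 * Real.sin (Real.pi / (2 * k))) * ∑ j, enorm (w j) := by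
  have hk4 : 4 ≤ k := Nat.le_of_dvd hk h4
  have hk2 : 2 ≤ k := by omega
  have hkZ : (0 : ℤ) < k := by exact_mod_cast hk
  choose a p q h0p hp1 hq hceq using fun j => nearest_root k hk2 (c j) (hc j)
  -- bucket index for the imaginary part
  set off : Fin m → ℤ := fun j => if 0 ≤ q j then (k : ℤ) / 4 else -((k : ℤ) / 4) with hoff
  have hbval : ∀ j, 0 ≤ ((a j).val + off j) % k ∧ ((a j).val + off j) % k < k := fun j =>
    ⟨Int.emod_nonneg _ hkZ.ne', Int.emod_lt_of_pos _ hkZ⟩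
  set b : Fin m → Fin k := fun j => ⟨(((a j).val + off j) % k).toNat, by
    have := hbval j; omega⟩ with hbdef
  have hb : ∀ j, rt k (b j).val = (if 0 ≤ q j then Complex.I else -Complex.I) * rt k (a j).val := by
    intro j
    have hval : (((b j).val : ℤ)) = ((a j).val + off j) % k := by
      simp only [hbdef]
      exact Int.toNat_of_nonneg (hbval j).1
    rw [hval, rt_emod k hk, rt_add]
    by_cases hqj : 0 ≤ q j
    · rw [if_pos hqj, show off j = (k:ℤ)/4 from by simp [hoff, hqj],
        rt_quarter k hk h4, mul_comm]
    · rw [if_neg hqj, show off j = -((k:ℤ)/4) from by simp [hoff, hqj],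
        rt_neg_quarter k hk h4, mul_comm]
  -- the real (bucket) coefficients
  set coR : Fin m → Fin k → ℝ := fun j t =>
    (if a j = t then p j else 0) + (if b j = t then |q j| else 0) with hcoR
  have hcoRnn : ∀ j t, 0 ≤ coR j t := by
    intro j t
    apply add_nonneg <;> split <;> simp [h0p, abs_nonneg]
  set W : Fin k → Fin n → ℂ := fun t => ∑ j, ((coR j t : ℝ) : ℂ) • w j with hW
  refine ⟨W, ?_, ?_, ?_⟩
  · intro t i
    rw [hW]
    simp only [Finset.sum_apply, Pi.smul_apply, smul_eq_mul]
    apply Finset.sum_nonneg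
    intro j _
    apply mul_nonneg _ (hw j i)
    rw [Complex.le_def]
    simp [hcoRnn j t]
  · -- the decomposition identity
    have hsum : ∀ t : Fin k,
        Complex.exp (2 * (Real.pi : ℂ) * Complex.I * ((t.val : ℕ) : ℂ) / (k : ℂ)) • W t
        = ∑ j, (rt k t.val * ((coR j t : ℝ) : ℂ)) • w j := by
      intro t
      rw [rt_natCast, hW, Finset.smul_sum]
      apply Finset.sum_congr rfl
      intro j _
      rw [smul_smul]
    rw [Finset.sum_congr rfl (fun t _ => hsum t), Finset.sum_comm]
    apply Finset.sum_congr rfl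
    intro j _
    have expand : ∀ t : Fin k, (rt k t.val * ((coR j t : ℝ) : ℂ)) • w j
        = (if a j = t then (rt k t.val * ((p j : ℝ) : ℂ)) • w j else 0)
          + (if b j = t then (rt k t.val * ((|q j| : ℝ) : ℂ)) • w j else 0) := by
      intro t
      rw [hcoR]
      push_cast
      rw [mul_add, add_smul]
      congr 1 <;> split <;> simp
    rw [Finset.sum_congr rfl (fun t _ => expand t), Finset.sum_add_distrib,
      Finset.sum_ite_eq, Finset.sum_ite_eq]
    simp only [Finset.mem_univ, if_true]
    have hbv : rt k ((((((a j).val : ℤ) + off j) % (k:ℤ)).toNat : ℕ) : ℤ)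
        = (if 0 ≤ q j then Complex.I else -Complex.I) * rt k (a j).val := hb j
    rw [hbv, hceq j, ← add_smul]
    congr 1
    by_cases hqj : 0 ≤ q j
    · rw [if_pos hqj, abs_of_nonneg hqj]
      ring
    · rw [if_neg hqj, abs_of_neg (not_le.mp hqj)]
      push_cast
      ring
  · -- the norm bound
    calc ∑ t, enorm (W t) ≤ ∑ t, ∑ j, enorm (((coR j t : ℝ) : ℂ) • w j) := by
          apply Finset.sum_le_sum
          intro t _
          rw [hW]
          exact enorm_sum_le _
      _ = ∑ t, ∑ j, coR j t * enorm (w j) := by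
          apply Finset.sum_congr rfl; intro t _
          apply Finset.sum_congr rfl; intro j _
          exact enorm_smul _ (hcoRnn j t) _
      _ = ∑ j, (∑ t, coR j t) * enorm (w j) := by
          rw [Finset.sum_comm]
          apply Finset.sum_congr rfl; intro j _
          rw [Finset.sum_mul]
      _ ≤ ∑ j, (1 + 10 * Real.sin (Real.pi / (2 * k))) * enorm (w j) := by
          apply Finset.sum_le_sum
          intro j _
          apply mul_le_mul_of_nonneg_right _ (enorm_nonneg _)
          have : ∑ t, coR j t = p j + |q j| := by
            rw [hcoR]
            simp only []
            rw [Finset.sum_add_distrib, Finset.sum_ite_eq, Finset.sum_ite_eq]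
            simp
          rw [this]
          have := (hq j).trans (pi_div_le k hk4)
          linarith [hp1 j]
      _ = (1 + 10 * Real.sin (Real.pi / (2 * k))) * ∑ j, enorm (w j) := by
          rw [Finset.mul_sum]

lemma exists_four {n : ℕ} (v : Fin n → ℂ) :
    ∃ (c : Fin 4 → ℂ) (w : Fin 4 → Fin n → ℂ),
      (∀ j, ‖c j‖ = 1) ∧ (∀ j i, 0 ≤ w j i) ∧ v = ∑ j, c j • w j := by
  refine ⟨![1, Complex.I, -1, -Complex.I],
    ![fun i => ((max (v i).re 0 : ℝ) : ℂ), fun i => ((max (v i).im 0 : ℝ) : ℂ),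
      fun i => ((max (-(v i).re) 0 : ℝ) : ℂ), fun i => ((max (-(v i).im) 0 : ℝ) : ℂ)],
    ?_, ?_, ?_⟩
  · intro j; fin_cases j <;> simp
  · intro j i
    fin_cases j <;>
      · simp only [Matrix.cons_val_zero, Matrix.cons_val_one, Matrix.head_cons]
        rw [Complex.le_def]
        simp [le_max_right]
  · funext i
    rw [Fin.sum_univ_four]
    simp only [Matrix.cons_val_zero, Matrix.cons_val_one, Matrix.head_cons,
      Pi.add_apply, Pi.smul_apply, smul_eq_mul]
    apply Complex.ext <;>
      simp [max_def] <;> split_ifs <;> simp_all <;> linarith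


/-- For `k` a positive multiple of `4`,
`α_k(v)/(1 + 10 sin(π/(2k))) ≤ ‖v‖₁ᴺ ≤ α_k(v)`. -/
theorem statement_15 {n k : ℕ} (hk : 0 < k) (h4 : 4 ∣ k) (v : Fin n → ℂ) :
    alphaK k v / (1 + 10 * Real.sin (Real.pi / (2 * k))) ≤ nnNorm1 v ∧
      nnNorm1 v ≤ alphaK k v := by
  have hk4 : 4 ≤ k := Nat.le_of_dvd hk h4
  set D : ℝ := 1 + 10 * Real.sin (Real.pi / (2 * k)) with hD
  have hsin : 0 < Real.sin (Real.pi / (2 * k)) := by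
    apply Real.sin_pos_of_pos_of_lt_pi
    · positivity
    · rw [div_lt_iff₀ (by positivity)]
      nlinarith [Real.pi_pos, show (4:ℝ) ≤ k from by exact_mod_cast hk4]
  have hD0 : 0 < D := by rw [hD]; linarith
  set A := {s : ℝ | ∃ w : Fin k → Fin n → ℂ,
    (∀ j i, 0 ≤ w j i) ∧
    (v = ∑ j, Complex.exp (2 * (Real.pi : ℂ) * Complex.I * (j.val : ℂ) / (k : ℂ)) • w j) ∧
    s = ∑ j, Real.sqrt (∑ i, Complex.normSq (w j i))} with hA
  set B := {s : ℝ | ∃ (m : ℕ) (c : Fin m → ℂ) (w : Fin m → Fin n → ℂ),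
    (∀ j, ‖c j‖ = 1) ∧ (∀ j i, 0 ≤ w j i) ∧ (v = ∑ j, c j • w j) ∧
    s = ∑ j, Real.sqrt (∑ i, Complex.normSq (w j i))} with hB
  have halpha : alphaK k v = sInf A := rfl
  have hnn : nnNorm1 v = sInf B := rfl
  have hBdd : BddBelow B := by
    refine ⟨0, ?_⟩
    rintro s ⟨m, c, w, _, _, _, rfl⟩
    exact Finset.sum_nonneg fun j _ => Real.sqrt_nonneg _
  have hAB : A ⊆ B := by
    rintro s ⟨w, hw, hv, rfl⟩
    refine ⟨k, _, w, ?_, hw, hv, rfl⟩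
    intro j
    rw [show (2 * (Real.pi : ℂ) * Complex.I * (j.val : ℂ) / (k : ℂ))
        = ((2 * Real.pi * j.val / k : ℝ) : ℂ) * Complex.I from by push_cast; ring,
      Complex.norm_exp_ofReal_mul_I]
  have hAne : A.Nonempty := by
    obtain ⟨c, w, hc, hw, hv⟩ := exists_four v
    obtain ⟨W, hW1, hW2, _⟩ := main_construct k hk h4 4 c w hc hw
    exact ⟨∑ a, enorm (W a), W, hW1, by rw [hv, hW2], rfl⟩
  have hBne : B.Nonempty := hAne.mono hAB
  constructor
  · rw [halpha, hnn]
    apply le_csInf hBne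
    rintro s ⟨m, c, w, hc, hw, hv, rfl⟩
    obtain ⟨W, hW1, hW2, hW3⟩ := main_construct k hk h4 m c w hc hw
    rw [div_le_iff₀ hD0]
    calc sInf A ≤ ∑ a, enorm (W a) := by
          apply csInf_le (hBdd.mono hAB)
          exact ⟨W, hW1, by rw [hv, hW2], rfl⟩
      _ ≤ D * ∑ j, enorm (w j) := hW3
      _ = (∑ j, enorm (w j)) * D := mul_comm _ _
  · rw [halpha, hnn]
    exact csInf_le_csInf hBdd hAne hAB


end CPCPPaper
end

section
/- For every unit vector |v⟩ ∈ C^n, the robustness of non-negativity of the pure state |v⟩⟨v| satisfies N^R_CP(|v⟩⟨v|) = (‖|v⟩‖_1^N)² − 1. -/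
open Matrix BigOperators
open scoped ComplexOrder

namespace CPCPPaper

/-- The robustness of a state `ρ` with respect to a set `S` of states:
`min { s ≥ 0 : ∃ density matrix σ with (ρ + sσ)/(1+s) ∈ S }`. -/
noncomputable def robustness {n : ℕ} (S : Set (Matrix (Fin n) (Fin n) ℂ))
    (ρ : Matrix (Fin n) (Fin n) ℂ) : ℝ :=
  sInf {s : ℝ | 0 ≤ s ∧ ∃ σ : Matrix (Fin n) (Fin n) ℂ,
    σ.PosSemidef ∧ σ.trace = 1 ∧
    (((1 + s : ℝ) : ℂ))⁻¹ • (ρ + (s : ℂ) • σ) ∈ S}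

open scoped InnerProductSpace

section Helpers

lemma star_of_nonneg {z : ℂ} (h : 0 ≤ z) : star z = z := by
  rw [Complex.nonneg_iff] at h
  apply Complex.ext <;> simp [← h.2]

lemma cmul_nonneg {a b : ℂ} (ha : 0 ≤ a) (hb : 0 ≤ b) : 0 ≤ a * b := by
  rw [Complex.nonneg_iff] at ha hb ⊢
  constructor
  · simp only [Complex.mul_re, ← ha.2, ← hb.2, mul_zero, sub_zero]
    exact mul_nonneg ha.1 hb.1
  · simp [Complex.mul_im, ← ha.2, ← hb.2]

lemma normSq_of_nonneg {z : ℂ} (h : 0 ≤ z) : (Complex.normSq z : ℂ) = z * z := by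
  have hh : (starRingEnd ℂ) z = z := star_of_nonneg h
  rw [← Complex.mul_conj z, hh]

lemma vecMulVec_mulVec {n : ℕ} (a b x : Fin n → ℂ) :
    Matrix.vecMulVec a b *ᵥ x = (b ⬝ᵥ x) • a := by
  ext i
  simp [Matrix.mulVec, Matrix.vecMulVec_apply, dotProduct, Finset.mul_sum, mul_comm, mul_assoc,
    mul_left_comm]

lemma star_dot_of_nonneg {n : ℕ} {w : Fin n → ℂ} (hw : ∀ i, 0 ≤ w i) (x : Fin n → ℂ) :
    star x ⬝ᵥ w = star (w ⬝ᵥ x) := by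
  simp only [dotProduct, star_sum, Pi.star_apply, star_mul']
  exact Finset.sum_congr rfl fun i _ => by rw [star_of_nonneg (hw i), mul_comm]

lemma star_dot_comm {n : ℕ} (v x : Fin n → ℂ) : star x ⬝ᵥ v = star (star v ⬝ᵥ x) := by
  simp only [dotProduct, star_sum, Pi.star_apply, star_mul', star_star]
  exact Finset.sum_congr rfl fun i _ => mul_comm _ _

lemma vecMulVec_hermitian {n : ℕ} {w : Fin n → ℂ} (hw : ∀ i, 0 ≤ w i) :
    (Matrix.vecMulVec w w).IsHermitian := by
  ext i j
  simp only [Matrix.conjTranspose_apply, Matrix.vecMulVec_apply, star_mul']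
  rw [star_of_nonneg (hw i), star_of_nonneg (hw j), mul_comm]

lemma vecMulVec_quad {n : ℕ} {w : Fin n → ℂ} (hw : ∀ i, 0 ≤ w i) (x : Fin n → ℂ) :
    star x ⬝ᵥ Matrix.vecMulVec w w *ᵥ x = (Complex.normSq (w ⬝ᵥ x) : ℂ) := by
  rw [vecMulVec_mulVec, dotProduct_smul, smul_eq_mul, star_dot_of_nonneg hw x]
  exact Complex.mul_conj _

lemma vecMulVec_posSemidef {n : ℕ} {w : Fin n → ℂ} (hw : ∀ i, 0 ≤ w i) :
    (Matrix.vecMulVec w w).PosSemidef := by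
  refine Matrix.PosSemidef.of_dotProduct_mulVec_nonneg (vecMulVec_hermitian hw) fun x => ?_
  rw [vecMulVec_quad hw]
  exact Complex.zero_le_real.2 (Complex.normSq_nonneg _)

lemma rho_mulVec {n : ℕ} (v x : Fin n → ℂ) :
    (Matrix.of fun i j => v i * star (v j)) *ᵥ x = (star v ⬝ᵥ x) • v := by
  ext i
  simp [Matrix.mulVec, dotProduct, Finset.mul_sum, mul_comm, mul_assoc, mul_left_comm]

lemma rho_quad {n : ℕ} (v x : Fin n → ℂ) :
    star x ⬝ᵥ (Matrix.of fun i j => v i * star (v j)) *ᵥ x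
      = (Complex.normSq (star v ⬝ᵥ x) : ℂ) := by
  rw [rho_mulVec, dotProduct_smul, smul_eq_mul, star_dot_comm, mul_comm]
  simp [Complex.star_def, Complex.mul_conj, Complex.normSq_conj]

lemma rho_hermitian {n : ℕ} (v : Fin n → ℂ) :
    (Matrix.of fun i j => v i * star (v j)).IsHermitian := by
  ext i j
  simp [Matrix.conjTranspose_apply, mul_comm]

lemma rho_psd {n : ℕ} (v : Fin n → ℂ) :
    (Matrix.of fun i j => v i * star (v j)).PosSemidef := by
  refine Matrix.PosSemidef.of_dotProduct_mulVec_nonneg (rho_hermitian v) fun x => ?_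
  rw [rho_quad]
  exact Complex.zero_le_real.2 (Complex.normSq_nonneg _)

lemma rho_trace {n : ℕ} (v : Fin n → ℂ) :
    (Matrix.of fun i j => v i * star (v j)).trace = ((∑ i, Complex.normSq (v i) : ℝ) : ℂ) := by
  rw [Matrix.trace]
  push_cast
  exact Finset.sum_congr rfl fun i _ => Complex.mul_conj _

lemma psd_smul_real {n : ℕ} {A : Matrix (Fin n) (Fin n) ℂ} (hA : A.PosSemidef) {c : ℝ}
    (hc : 0 ≤ c) : (((c : ℂ)) • A).PosSemidef := by
  refine Matrix.PosSemidef.of_dotProduct_mulVec_nonneg ?_ ?_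
  · rw [Matrix.IsHermitian, Matrix.conjTranspose_smul, hA.1.eq]
    congr 1
    simp
  · intro x
    rw [Matrix.smul_mulVec, dotProduct_smul, smul_eq_mul]
    exact cmul_nonneg (Complex.zero_le_real.2 hc) (hA.dotProduct_mulVec_nonneg x)

lemma hermitian_smul_real {n : ℕ} {A : Matrix (Fin n) (Fin n) ℂ} (hA : A.IsHermitian) (c : ℝ) :
    (((c : ℂ)) • A).IsHermitian := by
  rw [Matrix.IsHermitian, Matrix.conjTranspose_smul, hA.eq]
  congr 1
  simp

lemma trace_vecMulVec_nonneg {n : ℕ} {w : Fin n → ℂ} (hw : ∀ i, 0 ≤ w i) :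
    (Matrix.vecMulVec w w).trace = ((∑ i, Complex.normSq (w i) : ℝ) : ℂ) := by
  rw [Matrix.trace]
  push_cast
  refine Finset.sum_congr rfl fun i _ => ?_
  have := normSq_of_nonneg (hw i)
  simp [Matrix.diag, Matrix.vecMulVec_apply, this]

lemma cs_aux {k : ℕ} (t a : Fin k → ℝ) (ht : ∀ j, 0 ≤ t j) (h0 : ∀ j, t j = 0 → a j = 0) :
    (∑ j, |a j|) ^ 2 ≤ (∑ j, t j) * ∑ j, (t j)⁻¹ * (a j) ^ 2 := by
  have key := Finset.sum_mul_sq_le_sq_mul_sq Finset.univ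
    (fun j => Real.sqrt (t j)) (fun j => |a j| / Real.sqrt (t j))
  have h1 : ∀ j : Fin k, Real.sqrt (t j) * (|a j| / Real.sqrt (t j)) = |a j| := by
    intro j
    rcases eq_or_ne (t j) 0 with h | h
    · simp [h0 j h]
    · rw [mul_div_cancel₀]
      exact Real.sqrt_ne_zero'.2 (lt_of_le_of_ne (ht j) (Ne.symm h))
  have h2 : ∀ j : Fin k, Real.sqrt (t j) ^ 2 = t j := fun j => Real.sq_sqrt (ht j)
  have h3 : ∀ j : Fin k, (|a j| / Real.sqrt (t j)) ^ 2 = (t j)⁻¹ * (a j) ^ 2 := by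
    intro j
    rw [div_pow, sq_abs, h2 j, div_eq_inv_mul]
  calc (∑ j, |a j|) ^ 2 = (∑ j, Real.sqrt (t j) * (|a j| / Real.sqrt (t j))) ^ 2 := by
        rw [Finset.sum_congr rfl fun j _ => (h1 j).symm]
    _ ≤ (∑ j, Real.sqrt (t j) ^ 2) * ∑ j, (|a j| / Real.sqrt (t j)) ^ 2 := key
    _ = (∑ j, t j) * ∑ j, (t j)⁻¹ * (a j) ^ 2 := by
        rw [Finset.sum_congr rfl fun j _ => h2 j, Finset.sum_congr rfl fun j _ => h3 j]

lemma eq_zero_of_enorm_zero {n : ℕ} {w : Fin n → ℂ}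
    (h : Real.sqrt (∑ i, Complex.normSq (w i)) = 0) : w = 0 := by
  have hnn : (0:ℝ) ≤ ∑ i, Complex.normSq (w i) :=
    Finset.sum_nonneg fun i _ => Complex.normSq_nonneg _
  have h2 : ∑ i, Complex.normSq (w i) = 0 := (Real.sqrt_eq_zero hnn).1 h
  funext i
  have := (Finset.sum_eq_zero_iff_of_nonneg (fun i _ => Complex.normSq_nonneg (w i))).1 h2 i
    (Finset.mem_univ i)
  simpa using Complex.normSq_eq_zero.1 this

lemma vecMulVec_smul {n : ℕ} (a : ℂ) (u : Fin n → ℂ) :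
    Matrix.vecMulVec (fun i => a * u i) (fun i => a * u i)
      = (a * a) • Matrix.vecMulVec u u := by
  ext i j
  simp only [Matrix.vecMulVec_apply, Matrix.smul_apply, smul_eq_mul]
  ring

lemma exists_mulVec_eq {n : ℕ} {M : Matrix (Fin n) (Fin n) ℂ} {v : Fin n → ℂ}
    (hM : M.PosSemidef)
    (hsub : (M - Matrix.of fun i j => v i * star (v j)).PosSemidef) :
    ∃ u, M *ᵥ u = v := by
  classical
  set S : Submodule ℂ (EuclideanSpace ℂ (Fin n)) := LinearMap.range (Matrix.toEuclideanLin M)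
    with hS
  set v' : EuclideanSpace ℂ (Fin n) := (WithLp.equiv 2 (Fin n → ℂ)).symm v with hv'
  set p : EuclideanSpace ℂ (Fin n) := (S.starProjection v' : EuclideanSpace ℂ (Fin n))
    with hp
  set z : EuclideanSpace ℂ (Fin n) := v' - p with hzdef
  have hzS : z ∈ Sᗮ := Submodule.sub_starProjection_mem_orthogonal v'
  set zt : Fin n → ℂ := WithLp.equiv 2 (Fin n → ℂ) z with hzt
  have hMz_mem : Matrix.toEuclideanLin M z ∈ S := ⟨z, rfl⟩
  have h1 : ⟪Matrix.toEuclideanLin M z, z⟫_ℂ = 0 :=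
    Submodule.inner_right_of_mem_orthogonal hMz_mem hzS
  have h2 : star (M *ᵥ zt) ⬝ᵥ zt = 0 := by
    rw [← h1, EuclideanSpace.inner_eq_star_dotProduct, dotProduct_comm]
    rfl
  have h3 : star zt ⬝ᵥ M *ᵥ zt = 0 := by
    rw [star_dot_comm (M *ᵥ zt) zt, h2, star_zero]
  have h4 : M *ᵥ zt = 0 := (hM.dotProduct_mulVec_zero_iff zt).1 h3
  have h5 : star v ⬝ᵥ zt = 0 := by
    have := hsub.dotProduct_mulVec_nonneg zt
    rw [Matrix.sub_mulVec, dotProduct_sub, h4, dotProduct_zero, rho_quad] at this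
    rw [zero_sub, ← Complex.ofReal_neg] at this
    have h6 : (0:ℝ) ≤ -Complex.normSq (star v ⬝ᵥ zt) := Complex.zero_le_real.1 this
    have h7 : Complex.normSq (star v ⬝ᵥ zt) = 0 :=
      le_antisymm (by linarith) (Complex.normSq_nonneg _)
    exact Complex.normSq_eq_zero.1 h7
  have hinnerv : ⟪v', z⟫_ℂ = 0 := by
    rw [EuclideanSpace.inner_eq_star_dotProduct, dotProduct_comm]
    exact h5
  have hinnerp : ⟪p, z⟫_ℂ = 0 :=
    Submodule.inner_right_of_mem_orthogonal (S.starProjection_apply_mem v') hzS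
  have hz0 : z = 0 := by
    rw [← inner_self_eq_zero (𝕜 := ℂ) (x := z), hzdef, inner_sub_left, ← hzdef, hinnerv, hinnerp,
      sub_zero]
  have hv'S : v' ∈ S := by
    have : v' = p := by rw [← sub_eq_zero, ← hzdef, hz0]
    rw [this]; exact S.starProjection_apply_mem v'
  obtain ⟨u, hu⟩ := hv'S
  refine ⟨WithLp.equiv 2 (Fin n → ℂ) u, ?_⟩
  have := congrArg (WithLp.equiv 2 (Fin n → ℂ)) hu
  exact this

end Helpers

lemma decomp_ge_one {n k : ℕ} (v : Fin n → ℂ) (hv : ∑ i, Complex.normSq (v i) = 1)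
    (c : Fin k → ℂ) (w : Fin k → Fin n → ℂ)
    (hc : ∀ j, ‖c j‖ = 1) (hvw : v = ∑ j, c j • w j) :
    1 ≤ ∑ j, Real.sqrt (∑ i, Complex.normSq (w j i)) := by
  classical
  have key : ∀ u : Fin n → ℂ,
      ‖(WithLp.equiv 2 (Fin n → ℂ)).symm u‖ = Real.sqrt (∑ i, Complex.normSq (u i)) := by
    intro u
    rw [EuclideanSpace.norm_eq]
    congr 1
    refine Finset.sum_congr rfl fun i _ => ?_
    simp [Complex.sq_norm]
  have h1 : ‖(WithLp.equiv 2 (Fin n → ℂ)).symm v‖ = 1 := by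
    rw [key, hv, Real.sqrt_one]
  have h2 : (WithLp.equiv 2 (Fin n → ℂ)).symm v
      = ∑ j, c j • (WithLp.equiv 2 (Fin n → ℂ)).symm (w j) := by
    rw [hvw]
    change WithLp.toLp 2 _ = ∑ j, c j • WithLp.toLp 2 (w j)
    rw [WithLp.toLp_sum]
    rfl
  calc (1:ℝ) = ‖(WithLp.equiv 2 (Fin n → ℂ)).symm v‖ := h1.symm
    _ ≤ ∑ j, ‖c j • (WithLp.equiv 2 (Fin n → ℂ)).symm (w j)‖ := by
        rw [h2]; exact norm_sum_le _ _
    _ = ∑ j, Real.sqrt (∑ i, Complex.normSq (w j i)) := by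
        refine Finset.sum_congr rfl fun j _ => ?_
        rw [norm_smul, hc j, one_mul, key]

lemma nnNorm_mem_canonical {n : ℕ} (v : Fin n → ℂ) :
    ∃ s : ℝ, s ∈ {s : ℝ | ∃ (k : ℕ) (c : Fin k → ℂ) (w : Fin k → Fin n → ℂ),
      (∀ j, ‖c j‖ = 1) ∧ (∀ j i, 0 ≤ w j i) ∧ (v = ∑ j, c j • w j) ∧
      s = ∑ j, Real.sqrt (∑ i, Complex.normSq (w j i))} := by
  classical
  refine ⟨_, n, fun j => if v j = 0 then 1 else v j / ‖v j‖,
    fun j i => if i = j then ((‖v j‖ : ℝ) : ℂ) else 0, ?_, ?_, ?_, rfl⟩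
  · intro j
    rcases eq_or_ne (v j) 0 with h | h
    · simp [h]
    · simp [h, norm_div, norm_ne_zero_iff.2 h, div_self (norm_ne_zero_iff.2 h)]
  · intro j i
    dsimp only
    split
    · exact Complex.zero_le_real.2 (norm_nonneg _)
    · exact le_refl _
  · funext i
    rw [Finset.sum_apply]
    have hterm : ∀ j : Fin n, ((if v j = 0 then 1 else v j / ‖v j‖) •
        fun i => if i = j then ((‖v j‖ : ℝ) : ℂ) else 0) i
        = if i = j then (if v j = 0 then 1 else v j / ‖v j‖) * ((‖v j‖ : ℝ) : ℂ) else 0 := by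
      intro j
      simp only [Pi.smul_apply, smul_eq_mul, mul_ite, mul_zero]
    rw [Finset.sum_congr rfl fun j _ => hterm j, Finset.sum_ite_eq Finset.univ i
      (fun j => (if v j = 0 then 1 else v j / ‖v j‖) * ((‖v j‖ : ℝ) : ℂ))]
    simp only [Finset.mem_univ, if_true]
    rcases eq_or_ne (v i) 0 with h | h
    · simp [h]
    · rw [if_neg h]
      rw [div_mul_cancel₀]
      exact Complex.ofReal_ne_zero.2 (norm_ne_zero_iff.2 h)



lemma sum_mulVec' {k n : ℕ} (A : Fin k → Matrix (Fin n) (Fin n) ℂ) (x : Fin n → ℂ) :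
    (∑ j, A j) *ᵥ x = ∑ j, A j *ᵥ x := by
  ext i
  simp only [Matrix.mulVec, dotProduct, Finset.sum_apply, Matrix.sum_apply, Finset.sum_mul]
  exact Finset.sum_comm

lemma dotProduct_sum' {k n : ℕ} (y : Fin n → ℂ) (f : Fin k → Fin n → ℂ) :
    y ⬝ᵥ (∑ j, f j) = ∑ j, y ⬝ᵥ f j := by
  simp only [dotProduct, Finset.sum_apply, Finset.mul_sum]
  exact Finset.sum_comm

lemma sum_dotProduct' {k n : ℕ} (f : Fin k → Fin n → ℂ) (y : Fin n → ℂ) :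
    (∑ j, f j) ⬝ᵥ y = ∑ j, f j ⬝ᵥ y := by
  simp only [dotProduct, Finset.sum_apply, Finset.sum_mul]
  exact Finset.sum_comm

lemma psd_add {n : ℕ} {A B : Matrix (Fin n) (Fin n) ℂ} (hA : A.PosSemidef)
    (hB : B.PosSemidef) : (A + B).PosSemidef := by
  refine Matrix.PosSemidef.of_dotProduct_mulVec_nonneg (hA.1.add hB.1) fun x => ?_
  rw [Matrix.add_mulVec, dotProduct_add]
  exact add_nonneg (hA.dotProduct_mulVec_nonneg x) (hB.dotProduct_mulVec_nonneg x)

lemma aux_mem_rob {n : ℕ} (v : Fin n → ℂ) (hv : ∑ i, Complex.normSq (v i) = 1)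
    (k : ℕ) (c : Fin k → ℂ) (w : Fin k → Fin n → ℂ)
    (hc : ∀ j, ‖c j‖ = 1) (hw : ∀ j i, 0 ≤ w j i) (hvw : v = ∑ j, c j • w j)
    (s : ℝ) (hs : (∑ j, Real.sqrt (∑ i, Complex.normSq (w j i))) ^ 2 - 1 ≤ s) (hs0 : 0 < s) :
    0 ≤ s ∧ ∃ σ : Matrix (Fin n) (Fin n) ℂ, σ.PosSemidef ∧ σ.trace = 1 ∧
      IsCPState ((((1 + s : ℝ) : ℂ))⁻¹ •
        ((Matrix.of fun i j => v i * star (v j)) + (s : ℂ) • σ)) := by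
  classical
  set t : Fin k → ℝ := fun j => Real.sqrt (∑ i, Complex.normSq (w j i)) with ht_def
  set r : ℝ := ∑ j, t j with hr_def
  have hrs : r ^ 2 - 1 ≤ s := hs
  have ht0 : ∀ j, 0 ≤ t j := fun j => Real.sqrt_nonneg _
  have hr1 : (1:ℝ) ≤ r := decomp_ge_one v hv c w hc hvw
  have hn : 0 < n := by
    rcases Nat.eq_zero_or_pos n with h | h
    · exfalso; subst h; simp at hv
    · exact h
  have h1s : (0:ℝ) < 1 + s := by linarith
  set i0 : Fin n := ⟨0, hn⟩ with hi0
  set e0 : Fin n → ℂ := fun i => if i = i0 then 1 else 0 with he0_def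
  have he0 : ∀ i, 0 ≤ e0 i := by
    intro i
    show (0:ℂ) ≤ if i = i0 then 1 else 0
    split
    · exact zero_le_one
    · exact le_refl 0
  set C : Matrix (Fin n) (Fin n) ℂ := Matrix.vecMulVec e0 e0 with hC_def
  have hCtr : C.trace = 1 := by
    rw [hC_def, trace_vecMulVec_nonneg he0]
    have h1 : (∑ i, Complex.normSq (e0 i)) = 1 := by
      rw [he0_def]
      simp only [apply_ite Complex.normSq, Complex.normSq_one, Complex.normSq_zero]
      rw [Finset.sum_ite_eq' Finset.univ i0 (fun _ => (1:ℝ))]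
      simp
    rw [h1]
    norm_num
  set ρ : Matrix (Fin n) (Fin n) ℂ := Matrix.of fun i j => v i * star (v j) with hρ_def
  set W : Fin k → Matrix (Fin n) (Fin n) ℂ := fun j => Matrix.vecMulVec (w j) (w j) with hW_def
  set M : Matrix (Fin n) (Fin n) ℂ := ∑ j, ((r * (t j)⁻¹ : ℝ) : ℂ) • W j with hM_def
  set δ : ℝ := s - (r ^ 2 - 1) with hδ_def
  have hδ0 : 0 ≤ δ := by rw [hδ_def]; linarith
  have hw0 : ∀ j, t j = 0 → w j = 0 := fun j h => eq_zero_of_enorm_zero h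
  have hWtr : ∀ j, (W j).trace = ((t j ^ 2 : ℝ) : ℂ) := by
    intro j
    rw [hW_def, trace_vecMulVec_nonneg (hw j)]
    congr 1
    exact (Real.sq_sqrt (Finset.sum_nonneg fun i _ => Complex.normSq_nonneg _)).symm
  have htt : ∀ j, r * (t j)⁻¹ * t j ^ 2 = r * t j := by
    intro j
    rcases eq_or_ne (t j) 0 with h | h
    · rw [h]; ring
    · field_simp
  have hMtr : M.trace = ((r ^ 2 : ℝ) : ℂ) := by
    rw [hM_def, Matrix.trace_sum]
    have hterm : ∀ j : Fin k, (((r * (t j)⁻¹ : ℝ) : ℂ) • W j).trace = ((r * t j : ℝ) : ℂ) := by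
      intro j
      rw [Matrix.trace_smul, hWtr j, smul_eq_mul, ← Complex.ofReal_mul, htt j]
    rw [Finset.sum_congr rfl fun j _ => hterm j, ← Complex.ofReal_sum]
    rw [← Finset.mul_sum, ← hr_def]
    norm_num [sq]
  have hρtr : ρ.trace = 1 := by
    rw [hρ_def, rho_trace, hv]
    norm_num
  have hMherm : M.IsHermitian := by
    rw [hM_def, Matrix.IsHermitian, Matrix.conjTranspose_sum]
    exact Finset.sum_congr rfl fun j _ =>
      (hermitian_smul_real (vecMulVec_hermitian (hw j)) _)
  have hMρ : (M - ρ).PosSemidef := by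
    refine Matrix.PosSemidef.of_dotProduct_mulVec_nonneg (hMherm.sub (rho_hermitian v)) fun x => ?_
    set a : Fin k → ℝ := fun j => ‖w j ⬝ᵥ x‖ with ha_def
    have ha0 : ∀ j, 0 ≤ a j := fun j => norm_nonneg _
    have haz : ∀ j, t j = 0 → a j = 0 := by
      intro j h
      rw [ha_def]
      simp [hw0 j h]
    have hterm : ∀ j : Fin k, star x ⬝ᵥ (((r * (t j)⁻¹ : ℝ) : ℂ) • W j) *ᵥ x
        = ((r * (t j)⁻¹ * a j ^ 2 : ℝ) : ℂ) := by
      intro j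
      rw [Matrix.smul_mulVec, dotProduct_smul, smul_eq_mul, hW_def,
        vecMulVec_quad (hw j)]
      have h1 : Complex.normSq (w j ⬝ᵥ x) = a j ^ 2 := (Complex.sq_norm _).symm
      rw [h1]
      push_cast
      ring
    have hMx : star x ⬝ᵥ M *ᵥ x = ((∑ j, r * (t j)⁻¹ * a j ^ 2 : ℝ) : ℂ) := by
      rw [hM_def, sum_mulVec', dotProduct_sum']
      rw [Finset.sum_congr rfl fun j _ => hterm j, Complex.ofReal_sum]
    have hρx : star x ⬝ᵥ ρ *ᵥ x = (Complex.normSq (star v ⬝ᵥ x) : ℂ) := rho_quad v x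
    have hq : star v ⬝ᵥ x = ∑ j, star (c j) * (w j ⬝ᵥ x) := by
      rw [hvw]
      have h1 : star (∑ j, c j • w j) = ∑ j, star (c j) • w j := by
        rw [star_sum]
        refine Finset.sum_congr rfl fun j _ => ?_
        rw [star_smul]
        congr 1
        funext i
        exact star_of_nonneg (hw j i)
      rw [h1, sum_dotProduct']
      exact Finset.sum_congr rfl fun j _ => smul_dotProduct _ _ _
    have habs : ‖star v ⬝ᵥ x‖ ≤ ∑ j, a j := by
      rw [hq]
      refine le_trans (norm_sum_le _ _) ?_
      refine Finset.sum_le_sum fun j _ => ?_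
      have h2 : ‖star (c j)‖ = 1 := by
        rw [norm_star]
        exact hc j
      rw [norm_mul, h2, one_mul]
  -- done: abs (w j ⬝ᵥ x) = a j
    have hreal : Complex.normSq (star v ⬝ᵥ x) ≤ ∑ j, r * (t j)⁻¹ * a j ^ 2 := by
      have h1 : Complex.normSq (star v ⬝ᵥ x) = ‖star v ⬝ᵥ x‖ ^ 2 :=
        (Complex.sq_norm _).symm
      have h2 : ‖star v ⬝ᵥ x‖ ^ 2 ≤ (∑ j, a j) ^ 2 :=
        pow_le_pow_left₀ (norm_nonneg _) habs 2
      have h3 : (∑ j, a j) ^ 2 ≤ (∑ j, t j) * ∑ j, (t j)⁻¹ * a j ^ 2 := by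
        have h5 := cs_aux t a ht0 haz
        rwa [Finset.sum_congr rfl fun j _ => abs_of_nonneg (ha0 j)] at h5
      have h4 : (∑ j, t j) * ∑ j, (t j)⁻¹ * a j ^ 2 = ∑ j, r * (t j)⁻¹ * a j ^ 2 := by
        rw [← hr_def, Finset.mul_sum]
        exact Finset.sum_congr rfl fun j _ => by ring
      linarith
    rw [Matrix.sub_mulVec, dotProduct_sub, hMx, hρx, ← Complex.ofReal_sub]
    exact Complex.zero_le_real.2 (by linarith)
  set σ : Matrix (Fin n) (Fin n) ℂ := ((s⁻¹ : ℝ) : ℂ) • (M - ρ + ((δ : ℝ) : ℂ) • C)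
    with hσ_def
  have hσpsd : σ.PosSemidef :=
    psd_smul_real (psd_add hMρ (psd_smul_real (vecMulVec_posSemidef he0) hδ0))
      (inv_nonneg.2 hs0.le)
  have hσtr : σ.trace = 1 := by
    rw [hσ_def, Matrix.trace_smul, Matrix.trace_add, Matrix.trace_sub, hMtr, hρtr,
      Matrix.trace_smul, hCtr, smul_eq_mul, smul_eq_mul, mul_one]
    have h1 : ((r ^ 2 : ℝ) : ℂ) - 1 + (δ : ℂ) = (s : ℂ) := by
      rw [hδ_def]
      push_cast
      ring
    rw [h1, ← Complex.ofReal_mul, inv_mul_cancel₀ (ne_of_gt hs0), Complex.ofReal_one]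
  have hsum_eq : ρ + (s : ℂ) • σ = M + ((δ : ℝ) : ℂ) • C := by
    rw [hσ_def, smul_smul, ← Complex.ofReal_mul, mul_inv_cancel₀ (ne_of_gt hs0),
      Complex.ofReal_one, one_smul]
    abel
  refine ⟨hs0.le, σ, hσpsd, hσtr, ?_, ?_⟩
  · -- IsCPMatrix
    rw [hsum_eq]
    set g : Fin (k + 1) → Fin n → ℂ := Fin.snoc
      (fun j => fun i => ((Real.sqrt ((1 + s)⁻¹ * (r * (t j)⁻¹)) : ℝ) : ℂ) * w j i)
      (fun i => ((Real.sqrt ((1 + s)⁻¹ * δ) : ℝ) : ℂ) * e0 i) with hg_def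
    refine ⟨k + 1, g, ?_, ?_⟩
    · intro j i
      refine Fin.lastCases ?_ ?_ j
      · rw [hg_def, Fin.snoc_last]
        exact cmul_nonneg (Complex.zero_le_real.2 (Real.sqrt_nonneg _)) (he0 i)
      · intro j'
        rw [hg_def, Fin.snoc_castSucc]
        exact cmul_nonneg (Complex.zero_le_real.2 (Real.sqrt_nonneg _)) (hw j' i)
    · rw [Fin.sum_univ_castSucc]
      have hlast : Matrix.vecMulVec (g (Fin.last k)) (g (Fin.last k))
          = (((1 + s)⁻¹ * δ : ℝ) : ℂ) • C := by
        rw [hg_def, Fin.snoc_last, vecMulVec_smul, ← Complex.ofReal_mul,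
          Real.mul_self_sqrt (mul_nonneg (inv_nonneg.2 h1s.le) hδ0), hC_def]
      have hcast : ∀ j : Fin k, Matrix.vecMulVec (g (Fin.castSucc j)) (g (Fin.castSucc j))
          = (((1 + s)⁻¹ * (r * (t j)⁻¹) : ℝ) : ℂ) • W j := by
        intro j
        rw [hg_def, Fin.snoc_castSucc, vecMulVec_smul, ← Complex.ofReal_mul,
          Real.mul_self_sqrt (mul_nonneg (inv_nonneg.2 h1s.le)
            (mul_nonneg (le_trans zero_le_one hr1) (inv_nonneg.2 (ht0 j)))), hW_def]
      rw [Finset.sum_congr rfl fun j _ => hcast j, hlast]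
      rw [hM_def, smul_add, Finset.smul_sum]
      congr 1
      · refine Finset.sum_congr rfl fun j _ => ?_
        rw [smul_smul, ← Complex.ofReal_inv, ← Complex.ofReal_mul]
      · rw [smul_smul, ← Complex.ofReal_inv, ← Complex.ofReal_mul]
  · -- trace = 1
    rw [hsum_eq, Matrix.trace_smul, Matrix.trace_add, hMtr, Matrix.trace_smul, hCtr,
      smul_eq_mul, smul_eq_mul, mul_one]
    have h1 : ((r ^ 2 : ℝ) : ℂ) + (δ : ℂ) = ((1 + s : ℝ) : ℂ) := by
      rw [hδ_def]
      push_cast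
      ring
    rw [h1, ← Complex.ofReal_inv, ← Complex.ofReal_mul,
      inv_mul_cancel₀ (ne_of_gt h1s), Complex.ofReal_one]


lemma nnNorm1_nonneg {n : ℕ} (v : Fin n → ℂ) : 0 ≤ nnNorm1 v := by
  apply Real.sInf_nonneg
  rintro y ⟨k, c, w, hc, hw, hvw, rfl⟩
  exact Finset.sum_nonneg fun j _ => Real.sqrt_nonneg _

lemma nnNorm1_bddBelow {n : ℕ} (v : Fin n → ℂ) :
    BddBelow {s : ℝ | ∃ (k : ℕ) (c : Fin k → ℂ) (w : Fin k → Fin n → ℂ),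
      (∀ j, ‖c j‖ = 1) ∧ (∀ j i, 0 ≤ w j i) ∧ (v = ∑ j, c j • w j) ∧
      s = ∑ j, Real.sqrt (∑ i, Complex.normSq (w j i))} := by
  refine ⟨0, ?_⟩
  rintro y ⟨k, c, w, hc, hw, hvw, rfl⟩
  exact Finset.sum_nonneg fun j _ => Real.sqrt_nonneg _

lemma aux_rob_lower {n : ℕ} (v : Fin n → ℂ) (hv : ∑ i, Complex.normSq (v i) = 1)
    (s : ℝ) (hs : 0 ≤ s) (σ : Matrix (Fin n) (Fin n) ℂ) (hσ : σ.PosSemidef) (hσt : σ.trace = 1)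
    (hcp : IsCPState ((((1 + s : ℝ) : ℂ))⁻¹ •
      ((Matrix.of fun i j => v i * star (v j)) + (s : ℂ) • σ))) :
    nnNorm1 v ^ 2 ≤ 1 + s := by
  classical
  obtain ⟨⟨k, x, hx, hX⟩, htrX⟩ := hcp
  have h1s : (0:ℝ) < 1 + s := by linarith
  have h1sC : ((1 + s : ℝ) : ℂ) ≠ 0 := Complex.ofReal_ne_zero.2 (ne_of_gt h1s)
  set ρ : Matrix (Fin n) (Fin n) ℂ := Matrix.of fun i j => v i * star (v j) with hρ_def
  set M : Matrix (Fin n) (Fin n) ℂ := ρ + (s : ℂ) • σ with hM_def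
  have hM1 : M = ((1 + s : ℝ) : ℂ) • ∑ j, Matrix.vecMulVec (x j) (x j) := by
    rw [← hX, smul_smul, mul_inv_cancel₀ h1sC, one_smul]
  set y : Fin k → Fin n → ℂ := fun j i => ((Real.sqrt (1 + s) : ℝ) : ℂ) * x j i with hy_def
  have hy : ∀ j i, 0 ≤ y j i := fun j i =>
    cmul_nonneg (Complex.zero_le_real.2 (Real.sqrt_nonneg _)) (hx j i)
  have hM2 : M = ∑ j, Matrix.vecMulVec (y j) (y j) := by
    rw [hM1, Finset.smul_sum]
    refine Finset.sum_congr rfl fun j _ => ?_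
    rw [hy_def]
    rw [vecMulVec_smul, ← Complex.ofReal_mul, Real.mul_self_sqrt h1s.le]
  have hMpsd : M.PosSemidef := psd_add (rho_psd v) (psd_smul_real hσ hs)
  have hMsub : (M - ρ).PosSemidef := by
    have : M - ρ = (s : ℂ) • σ := by rw [hM_def]; abel
    rw [this]
    exact psd_smul_real hσ hs
  obtain ⟨u, hu⟩ := exists_mulVec_eq hMpsd hMsub
  set b : Fin k → ℂ := fun j => y j ⬝ᵥ u with hb_def
  set B : ℝ := ∑ j, Complex.normSq (b j) with hB_def
  have hB0 : 0 ≤ B := Finset.sum_nonneg fun j _ => Complex.normSq_nonneg _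
  have hvdec : v = ∑ j, b j • y j := by
    rw [← hu, hM2, sum_mulVec']
    exact Finset.sum_congr rfl fun j _ => vecMulVec_mulVec _ _ _
  have hq : star u ⬝ᵥ v = (B : ℂ) := by
    rw [hvdec, dotProduct_sum', hB_def, Complex.ofReal_sum]
    refine Finset.sum_congr rfl fun j _ => ?_
    rw [dotProduct_smul, smul_eq_mul, star_dot_of_nonneg (hy j) u]
    have hby : y j ⬝ᵥ u = b j := rfl
    rw [hby]
    exact Complex.mul_conj _
  have hBle : B ≤ 1 := by
    have hpsd := hMsub.dotProduct_mulVec_nonneg u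
    rw [Matrix.sub_mulVec, dotProduct_sub, hu, hq, hρ_def, rho_quad] at hpsd
    have hvu : star v ⬝ᵥ u = (B : ℂ) := by
      rw [star_dot_comm u v, hq]
      simp
    rw [hvu] at hpsd
    have hnsq : Complex.normSq ((B : ℂ)) = B ^ 2 := by
      rw [Complex.normSq_ofReal, sq]
    rw [hnsq] at hpsd
    rw [show ((B : ℂ) - ((B ^ 2 : ℝ) : ℂ)) = ((B - B ^ 2 : ℝ) : ℂ) by push_cast; ring] at hpsd
    have h8 : (0:ℝ) ≤ B - B ^ 2 := Complex.zero_le_real.1 hpsd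
    nlinarith
  set τ : Fin k → ℝ := fun j => Real.sqrt (∑ i, Complex.normSq (y j i)) with hτ_def
  have hτ0 : ∀ j, 0 ≤ τ j := fun j => Real.sqrt_nonneg _
  have hMtr : M.trace = ((1 + s : ℝ) : ℂ) := by
    rw [hM_def, Matrix.trace_add, Matrix.trace_smul, rho_trace, hv, hσt, smul_eq_mul, mul_one]
    push_cast
    ring
  have hτsum : ∑ j, τ j ^ 2 = 1 + s := by
    have h1 : M.trace = ((∑ j, τ j ^ 2 : ℝ) : ℂ) := by
      rw [hM2, Matrix.trace_sum, Complex.ofReal_sum]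
      refine Finset.sum_congr rfl fun j _ => ?_
      rw [trace_vecMulVec_nonneg (hy j)]
      congr 1
      exact (Real.sq_sqrt (Finset.sum_nonneg fun i _ => Complex.normSq_nonneg _)).symm
    rw [hMtr] at h1
    exact (Complex.ofReal_inj.1 h1).symm
  -- the decomposition certificate
  set V : ℝ := ∑ j, ‖b j‖ * τ j with hV_def
  have hVmem : nnNorm1 v ≤ V := by
    apply csInf_le (nnNorm1_bddBelow v)
    refine ⟨k, fun j => if b j = 0 then 1 else b j / ‖b j‖,
      fun j i => ((‖b j‖ : ℝ) : ℂ) * y j i, ?_, ?_, ?_, ?_⟩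
    · intro j
      rcases eq_or_ne (b j) 0 with h | h
      · simp [h]
      · simp [h, norm_div, norm_ne_zero_iff.2 h, div_self (norm_ne_zero_iff.2 h)]
    · intro j i
      exact cmul_nonneg (Complex.zero_le_real.2 (norm_nonneg _)) (hy j i)
    · rw [hvdec]
      refine Finset.sum_congr rfl fun j _ => ?_
      funext i
      simp only [Pi.smul_apply, smul_eq_mul]
      rcases eq_or_ne (b j) 0 with h | h
      · simp [h]
      · rw [if_neg h]
        have hcne : ((‖b j‖ : ℝ) : ℂ) ≠ 0 := Complex.ofReal_ne_zero.2 (norm_ne_zero_iff.2 h)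
        conv_rhs => rw [← mul_assoc, div_mul_cancel₀ _ hcne]
    · rw [hV_def]
      refine Finset.sum_congr rfl fun j _ => ?_
      have h1 : ∀ i, Complex.normSq (((‖b j‖ : ℝ) : ℂ) * y j i)
          = ‖b j‖ ^ 2 * Complex.normSq (y j i) := by
        intro i
        rw [Complex.normSq_mul, Complex.normSq_ofReal, sq]
      rw [Finset.sum_congr rfl fun i _ => h1 i, ← Finset.mul_sum,
        Real.sqrt_mul (sq_nonneg _), Real.sqrt_sq (norm_nonneg _)]
  have hV0 : 0 ≤ V := Finset.sum_nonneg fun j _ => mul_nonneg (norm_nonneg _) (hτ0 j)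
  have hV2 : V ^ 2 ≤ 1 + s := by
    have h1 : V ^ 2 ≤ (∑ j, ‖b j‖ ^ 2) * ∑ j, τ j ^ 2 := by
      rw [hV_def]
      exact Finset.sum_mul_sq_le_sq_mul_sq Finset.univ _ _
    have h2 : (∑ j, ‖b j‖ ^ 2) = B := by
      rw [hB_def]
      refine Finset.sum_congr rfl fun j _ => ?_
      rw [← Complex.sq_norm]
    rw [h2, hτsum] at h1
    nlinarith
  have := pow_le_pow_left₀ (nnNorm1_nonneg v) (le_trans hVmem (le_refl V)) 2
  calc nnNorm1 v ^ 2 ≤ V ^ 2 := pow_le_pow_left₀ (nnNorm1_nonneg v) hVmem 2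
    _ ≤ 1 + s := hV2


/-- For a unit vector `v`, the robustness of non-negativity of the pure
state `|v⟩⟨v|` equals `(‖v‖₁ᴺ)² - 1`. -/
theorem statement_16 {n : ℕ} (v : Fin n → ℂ)
    (hv : ∑ i, Complex.normSq (v i) = 1) :
    robustness {ρ | IsCPState ρ} (Matrix.of fun i j => v i * star (v j)) =
      (nnNorm1 v) ^ 2 - 1 := by
  classical
  have hSn_ne : ∃ r : ℝ, r ∈ {s : ℝ | ∃ (k : ℕ) (c : Fin k → ℂ) (w : Fin k → Fin n → ℂ),
      (∀ j, ‖c j‖ = 1) ∧ (∀ j i, 0 ≤ w j i) ∧ (v = ∑ j, c j • w j) ∧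
      s = ∑ j, Real.sqrt (∑ i, Complex.normSq (w j i))} := nnNorm_mem_canonical v
  have hSn_ge1 : ∀ r ∈ {s : ℝ | ∃ (k : ℕ) (c : Fin k → ℂ) (w : Fin k → Fin n → ℂ),
      (∀ j, ‖c j‖ = 1) ∧ (∀ j i, 0 ≤ w j i) ∧ (v = ∑ j, c j • w j) ∧
      s = ∑ j, Real.sqrt (∑ i, Complex.normSq (w j i))}, 1 ≤ r := by
    rintro r ⟨k, c, w, hc, hw, hvw, rfl⟩
    exact decomp_ge_one v hv c w hc hvw
  set t : ℝ := nnNorm1 v with ht_def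
  have ht1 : 1 ≤ t := by
    rw [ht_def, nnNorm1]
    exact le_csInf hSn_ne hSn_ge1
  -- membership production for the robustness set
  have hmem : ∀ s : ℝ, (∃ r ∈ {s : ℝ | ∃ (k : ℕ) (c : Fin k → ℂ) (w : Fin k → Fin n → ℂ),
      (∀ j, ‖c j‖ = 1) ∧ (∀ j i, 0 ≤ w j i) ∧ (v = ∑ j, c j • w j) ∧
      s = ∑ j, Real.sqrt (∑ i, Complex.normSq (w j i))}, r ^ 2 - 1 ≤ s) → 0 < s →
      s ∈ {s : ℝ | 0 ≤ s ∧ ∃ σ : Matrix (Fin n) (Fin n) ℂ,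
        σ.PosSemidef ∧ σ.trace = 1 ∧
        (((1 + s : ℝ) : ℂ))⁻¹ • ((Matrix.of fun i j => v i * star (v j)) + (s : ℂ) • σ)
          ∈ {ρ | IsCPState ρ}} := by
    rintro s ⟨r, ⟨k, c, w, hc, hw, hvw, rfl⟩, hrs⟩ hs0
    exact aux_mem_rob v hv k c w hc hw hvw s hrs hs0
  have hSr_bdd : BddBelow {s : ℝ | 0 ≤ s ∧ ∃ σ : Matrix (Fin n) (Fin n) ℂ,
      σ.PosSemidef ∧ σ.trace = 1 ∧
      (((1 + s : ℝ) : ℂ))⁻¹ • ((Matrix.of fun i j => v i * star (v j)) + (s : ℂ) • σ)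
        ∈ {ρ | IsCPState ρ}} := ⟨0, fun s hs => hs.1⟩
  have hSr_ne : ∃ s : ℝ, s ∈ {s : ℝ | 0 ≤ s ∧ ∃ σ : Matrix (Fin n) (Fin n) ℂ,
      σ.PosSemidef ∧ σ.trace = 1 ∧
      (((1 + s : ℝ) : ℂ))⁻¹ • ((Matrix.of fun i j => v i * star (v j)) + (s : ℂ) • σ)
        ∈ {ρ | IsCPState ρ}} := by
    obtain ⟨r, hr⟩ := hSn_ne
    have hr1 : 1 ≤ r := hSn_ge1 r hr
    refine ⟨r ^ 2, hmem (r ^ 2) ⟨r, hr, by linarith⟩ (by nlinarith)⟩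
  rw [robustness]
  apply le_antisymm
  · -- sInf ≤ t^2 - 1
    by_contra hcon
    push_neg at hcon
    set ε : ℝ := (sInf {s : ℝ | 0 ≤ s ∧ ∃ σ : Matrix (Fin n) (Fin n) ℂ,
      σ.PosSemidef ∧ σ.trace = 1 ∧
      (((1 + s : ℝ) : ℂ))⁻¹ • ((Matrix.of fun i j => v i * star (v j)) + (s : ℂ) • σ)
        ∈ {ρ | IsCPState ρ}} - (t ^ 2 - 1)) / 2 with hε_def
    have hε0 : 0 < ε := by rw [hε_def]; linarith
    set η : ℝ := min 1 (ε / (2 * t + 1)) with hη_def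
    have hη0 : 0 < η := by
      rw [hη_def]
      exact lt_min one_pos (div_pos hε0 (by linarith))
    have hη1 : η ≤ 1 := min_le_left _ _
    have hη2 : η ≤ ε / (2 * t + 1) := min_le_right _ _
    obtain ⟨r, hrmem, hrlt⟩ : ∃ r ∈ {s : ℝ | ∃ (k : ℕ) (c : Fin k → ℂ)
        (w : Fin k → Fin n → ℂ), (∀ j, ‖c j‖ = 1) ∧ (∀ j i, 0 ≤ w j i) ∧
        (v = ∑ j, c j • w j) ∧
        s = ∑ j, Real.sqrt (∑ i, Complex.normSq (w j i))}, r < t + η := by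
      apply (csInf_lt_iff (nnNorm1_bddBelow v) hSn_ne).1
      rw [← nnNorm1, ← ht_def]
      linarith
    have hr1 : 1 ≤ r := hSn_ge1 r hrmem
    set s' : ℝ := (t + η) ^ 2 - 1 with hs'_def
    have hs'0 : 0 < s' := by rw [hs'_def]; nlinarith
    have hs'mem := hmem s' ⟨r, hrmem, by rw [hs'_def]; nlinarith⟩ hs'0
    have hle := csInf_le hSr_bdd hs'mem
    have : s' ≤ t ^ 2 - 1 + ε := by
      rw [hs'_def]
      have h3 : (0:ℝ) < 2 * t + 1 := by linarith
      have h2 : η * (2 * t + 1) ≤ ε := by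
        calc η * (2 * t + 1) ≤ (ε / (2 * t + 1)) * (2 * t + 1) :=
              mul_le_mul_of_nonneg_right hη2 h3.le
        _ = ε := div_mul_cancel₀ ε (ne_of_gt h3)
      nlinarith
    rw [hε_def] at this
    linarith
  · -- t^2 - 1 ≤ sInf
    apply le_csInf hSr_ne
    rintro s ⟨hs0, σ, hσpsd, hσtr, hσcp⟩
    have := aux_rob_lower v hv s hs0 σ hσpsd hσtr hσcp
    rw [← ht_def] at this
    linarith
end CPCPPaper
end

section
/- If ρ ∈ M_2 is a qubit density matrix with (1,2)-entry ρ_{1,2}, then the trace distance of non-negativity and its modified version satisfy N^tr_CP(ρ) = N^tr_{λCP}(ρ) = 2·|min{Re(ρ_{1,2}), 0} + i·Im(ρ_{1,2})|. -/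
open Matrix BigOperators
open scoped ComplexOrder

namespace CPCPPaper

/-- The trace norm of a matrix: the sum of its singular values, i.e. the sum of the
square roots of the eigenvalues of `Aᴴ A`. -/
noncomputable def traceNorm {n : ℕ} (A : Matrix (Fin n) (Fin n) ℂ) : ℝ :=
  ∑ i, Real.sqrt ((Matrix.posSemidef_conjTranspose_mul_self A).1.eigenvalues i)

/-- The trace distance of non-negativity. -/
noncomputable def NtrCP {n : ℕ} (ρ : Matrix (Fin n) (Fin n) ℂ) : ℝ :=
  sInf {t : ℝ | ∃ σ : Matrix (Fin n) (Fin n) ℂ, IsCPState σ ∧ t = traceNorm (ρ - σ)}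

/-- The modified trace distance of non-negativity. -/
noncomputable def NtrLambdaCP {n : ℕ} (ρ : Matrix (Fin n) (Fin n) ℂ) : ℝ :=
  sInf {t : ℝ | ∃ (σ : Matrix (Fin n) (Fin n) ℂ) (l : ℝ), IsCPState σ ∧ 0 ≤ l ∧
    t = traceNorm (ρ - (l : ℂ) • σ)}

open ComplexConjugate

lemma trace_eq_sum_eig {A : Matrix (Fin 2) (Fin 2) ℂ} (hA : A.IsHermitian) :
    A.trace = ∑ i, (hA.eigenvalues i : ℂ) := by
  nth_rewrite 1 [hA.spectral_theorem]
  rw [Unitary.conjStarAlgAut_apply, Matrix.trace_mul_cycle, Unitary.coe_star_mul_self, Matrix.one_mul,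
    Matrix.trace_diagonal]
  simp

lemma traceNorm_formula (A : Matrix (Fin 2) (Fin 2) ℂ) :
    traceNorm A = Real.sqrt ((Aᴴ * A).trace.re + 2 * Real.sqrt (Complex.normSq A.det)) := by
  have hB := Matrix.posSemidef_conjTranspose_mul_self A
  set e := hB.1.eigenvalues with he
  have h0 : 0 ≤ e 0 := hB.eigenvalues_nonneg 0
  have h1 : 0 ≤ e 1 := hB.eigenvalues_nonneg 1
  have hsum : (Aᴴ * A).trace.re = e 0 + e 1 := by
    have := trace_eq_sum_eig hB.1
    rw [Fin.sum_univ_two] at this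
    have := congrArg Complex.re this
    simpa using this
  have hprod : Complex.normSq A.det = e 0 * e 1 := by
    have hd := hB.1.det_eq_prod_eigenvalues
    rw [Fin.prod_univ_two] at hd
    have hdet : (Aᴴ * A).det = (Complex.normSq A.det : ℂ) := by
      rw [Matrix.det_mul, Matrix.det_conjTranspose, Complex.normSq_eq_conj_mul_self]
      rfl
    rw [hdet] at hd
    exact_mod_cast congrArg Complex.re hd
  have key : Real.sqrt (e 0) + Real.sqrt (e 1)
      = Real.sqrt (e 0 + e 1 + 2 * Real.sqrt (e 0 * e 1)) := by
    have hsq : (Real.sqrt (e 0) + Real.sqrt (e 1)) ^ 2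
        = e 0 + e 1 + 2 * Real.sqrt (e 0 * e 1) := by
      rw [add_sq, Real.sq_sqrt h0, Real.sq_sqrt h1, Real.sqrt_mul h0]
      ring
    rw [← hsq, Real.sqrt_sq (by positivity)]
  rw [traceNorm, Fin.sum_univ_two, hsum, hprod, ← he, key]

lemma trace_re_eq (A : Matrix (Fin 2) (Fin 2) ℂ) :
    (Aᴴ * A).trace.re = Complex.normSq (A 0 0) + Complex.normSq (A 0 1)
      + Complex.normSq (A 1 0) + Complex.normSq (A 1 1) := by
  simp only [Matrix.trace_fin_two, Matrix.mul_apply, Fin.sum_univ_two,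
    Matrix.conjTranspose_apply, RCLike.star_def, ← Complex.normSq_eq_conj_mul_self]
  simp only [Complex.add_re, Complex.ofReal_re]
  ring

lemma traceNorm_lower (A : Matrix (Fin 2) (Fin 2) ℂ) (h : A 1 0 = conj (A 0 1)) :
    2 * ‖A 0 1‖ ≤ traceNorm A := by
  rw [traceNorm_formula,
    Real.le_sqrt (by positivity) (by
      rw [trace_re_eq]
      nlinarith [Complex.normSq_nonneg (A 0 0), Complex.normSq_nonneg (A 0 1),
        Complex.normSq_nonneg (A 1 0), Complex.normSq_nonneg (A 1 1),
        Real.sqrt_nonneg (Complex.normSq A.det)])]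
  have hT := trace_re_eq A
  rw [h] at hT
  have hdet : -A.det = A 0 1 * conj (A 0 1) - A 0 0 * A 1 1 := by
    rw [Matrix.det_fin_two, h]; ring
  have h1 : Complex.normSq (A 0 1) - (A 0 0 * A 1 1).re ≤ Real.sqrt (Complex.normSq A.det) := by
    have habs : Real.sqrt (Complex.normSq A.det) = ‖A.det‖ := rfl
    rw [habs, ← norm_neg]
    calc Complex.normSq (A 0 1) - (A 0 0 * A 1 1).re = (-A.det).re := by
          rw [hdet]; simp [Complex.mul_conj]
      _ ≤ ‖-A.det‖ := Complex.re_le_norm _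
  have hsq : (2 * ‖A 0 1‖) ^ 2 = 4 * Complex.normSq (A 0 1) := by
    rw [mul_pow, Complex.sq_norm]; ring
  have hnn : 0 ≤ Complex.normSq (A 0 0 - conj (A 1 1)) := Complex.normSq_nonneg _
  have hexp : Complex.normSq (A 0 0 - conj (A 1 1))
      = Complex.normSq (A 0 0) + Complex.normSq (A 1 1) - 2 * (A 0 0 * A 1 1).re := by
    simp [Complex.normSq_apply, Complex.sub_re, Complex.sub_im, Complex.mul_re]
    ring
  have h2 : Complex.normSq (conj (A 0 1)) = Complex.normSq (A 0 1) := Complex.normSq_conj _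
  nlinarith [h1, hT]

lemma traceNorm_offdiag (β : ℂ) : traceNorm !![0, β; conj β, 0] = 2 * ‖β‖ := by
  rw [traceNorm_formula]
  have hT := trace_re_eq !![0, β; conj β, 0]
  simp only [Matrix.cons_val', Matrix.cons_val_zero, Matrix.cons_val_one, Matrix.head_cons,
    Matrix.empty_val', Matrix.cons_val_fin_one, Matrix.head_fin_const, Complex.normSq_conj,
    Complex.normSq_zero, Matrix.of_apply, Matrix.cons_val_fin_one] at hT
  have hdet : (!![0, β; conj β, 0] : Matrix (Fin 2) (Fin 2) ℂ).det = -(Complex.normSq β : ℂ) := by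
    rw [Matrix.det_fin_two_of]
    simp [Complex.mul_conj]
  rw [hT, hdet]
  have : Complex.normSq (-(Complex.normSq β : ℂ)) = (Complex.normSq β) ^ 2 := by
    simp [Complex.normSq_ofReal]; ring
  rw [this, Real.sqrt_sq (Complex.normSq_nonneg _)]
  have : (0:ℝ) + Complex.normSq β + Complex.normSq β + 0 + 2 * Complex.normSq β
      = (2 * ‖β‖) ^ 2 := by
    rw [mul_pow, Complex.sq_norm]; ring
  rw [this, Real.sqrt_sq (by positivity)]

lemma cp_entries {σ : Matrix (Fin 2) (Fin 2) ℂ} (h : IsCPMatrix σ) :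
    0 ≤ (σ 0 1).re ∧ (σ 0 1).im = 0 ∧ σ 1 0 = σ 0 1 := by
  obtain ⟨k, v, hv, rfl⟩ := h
  have hre : ∀ j i, ((v j i).re : ℂ) = v j i ∧ 0 ≤ (v j i).re := by
    intro j i
    obtain ⟨h1, h2⟩ := Complex.nonneg_iff.mp (hv j i)
    refine ⟨?_, h1⟩
    apply Complex.ext
    · simp
    · simp [← h2]
  refine ⟨?_, ?_, ?_⟩
  · rw [Matrix.sum_apply, Complex.re_sum]
    apply Finset.sum_nonneg
    intro j _
    rw [Matrix.vecMulVec_apply, ← (hre j 0).1, ← (hre j 1).1, ← Complex.ofReal_mul]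
    simpa using mul_nonneg (hre j 0).2 (hre j 1).2
  · rw [Matrix.sum_apply, Complex.im_sum]
    apply Finset.sum_eq_zero
    intro j _
    rw [Matrix.vecMulVec_apply, ← (hre j 0).1, ← (hre j 1).1, ← Complex.ofReal_mul]
    simp
  · rw [Matrix.sum_apply, Matrix.sum_apply]
    apply Finset.sum_congr rfl
    intro j _
    rw [Matrix.vecMulVec_apply, Matrix.vecMulVec_apply, mul_comm]

lemma cp_of_entries (p q r : ℝ) (hp : 0 ≤ p) (hq : 0 ≤ q) (hr : 0 ≤ r) (hd : q ^ 2 ≤ p * r) :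
    IsCPMatrix !![(p:ℂ), q; q, r] := by
  by_cases hp0 : p = 0
  · have hq0 : q = 0 := by nlinarith
    refine ⟨1, fun _ i => ((![0, Real.sqrt r] i : ℝ) : ℂ), fun j i => ?_, ?_⟩
    · exact Complex.zero_le_real.2 (by fin_cases i <;> simp [Real.sqrt_nonneg])
    · rw [Fin.sum_univ_one]
      ext i j
      fin_cases i <;> fin_cases j <;>
        simp [Matrix.vecMulVec_apply, hp0, hq0, ← Complex.ofReal_mul, Real.mul_self_sqrt hr]
  · have hp' : 0 < p := lt_of_le_of_ne hp (Ne.symm hp0)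
    have hrq : 0 ≤ r - q ^ 2 / p := by
      rw [sub_nonneg, div_le_iff₀ hp']; nlinarith
    set s := Real.sqrt p with hs
    set t := q / Real.sqrt p with ht
    set u := Real.sqrt (r - q ^ 2 / p) with hu
    have hsp : s ≠ 0 := by positivity
    have hss : s * s = p := Real.mul_self_sqrt hp
    have hst : s * t = q := by rw [ht, ← hs]; field_simp
    have htu : t * t + u * u = r := by
      rw [ht, hu, Real.mul_self_sqrt hrq]
      field_simp
      rw [Real.sq_sqrt hp]; ring
    refine ⟨2, fun j i => ((![![s, t], ![0, u]] j i : ℝ) : ℂ), fun j i => ?_, ?_⟩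
    · refine Complex.zero_le_real.2 ?_
      fin_cases j <;> fin_cases i <;>
        simp [hs, ht, hu, Real.sqrt_nonneg, div_nonneg hq (Real.sqrt_nonneg p)]
    · rw [Fin.sum_univ_two]
      ext i j
      fin_cases i <;> fin_cases j <;>
        · simp [Matrix.vecMulVec_apply, ← Complex.ofReal_mul]
          norm_cast
          nlinarith [hss, hst, htu]

/-- For a qubit density matrix `ρ`, the trace distance of
non-negativity and its modified version both equal `2 |min{Re ρ₁₂, 0} + i Im ρ₁₂|`. -/
theorem statement_18 (ρ : Matrix (Fin 2) (Fin 2) ℂ)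
    (hρ : ρ.PosSemidef) (htr : ρ.trace = 1) :
    NtrCP ρ =
        2 * ‖((min (ρ 0 1).re 0 : ℝ) : ℂ) + ((ρ 0 1).im : ℂ) * Complex.I‖ ∧
    NtrLambdaCP ρ =
        2 * ‖((min (ρ 0 1).re 0 : ℝ) : ℂ) + ((ρ 0 1).im : ℂ) * Complex.I‖ := by
  set x := (ρ 0 1).re with hx
  set y := (ρ 0 1).im with hy
  set a := (ρ 0 0).re with ha'
  set c := (ρ 1 1).re with hc'
  set q : ℝ := max x 0 with hqdef
  set m : ℝ := 2 * ‖((min x 0 : ℝ) : ℂ) + (y : ℂ) * Complex.I‖ with hm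
  -- basic facts about ρ
  have h00 : ρ 0 0 = (a : ℂ) := by
    have := hρ.1.apply 0 0
    apply Complex.ext
    · simp [ha']
    · have him := congrArg Complex.im this
      simp only [RCLike.star_def, Complex.conj_im] at him
      simp only [Complex.ofReal_im]
      linarith
  have h11 : ρ 1 1 = (c : ℂ) := by
    have := hρ.1.apply 1 1
    apply Complex.ext
    · simp [hc']
    · have him := congrArg Complex.im this
      simp only [RCLike.star_def, Complex.conj_im] at him
      simp only [Complex.ofReal_im]
      linarith
  have h10 : ρ 1 0 = conj (ρ 0 1) := (hρ.1.apply 1 0).symm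
  have ha : 0 ≤ a := by
    have := hρ.diag_nonneg (i := 0)
    have h2 := (Complex.nonneg_iff.mp this).1
    simpa [Matrix.mulVec_single, dotProduct, Fin.sum_univ_two, Pi.single_apply] using h2
  have hc : 0 ≤ c := by
    have := hρ.diag_nonneg (i := 1)
    have h2 := (Complex.nonneg_iff.mp this).1
    simpa [Matrix.mulVec_single, dotProduct, Fin.sum_univ_two, Pi.single_apply] using h2
  have hdet : x ^ 2 + y ^ 2 ≤ a * c := by
    have hd : ρ.det = ∏ i, (hρ.1.eigenvalues i : ℂ) := hρ.1.det_eq_prod_eigenvalues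
    have hnn : 0 ≤ ρ.det.re := by
      rw [hd, Fin.prod_univ_two]
      norm_cast
      exact mul_nonneg (hρ.eigenvalues_nonneg 0) (hρ.eigenvalues_nonneg 1)
    rw [Matrix.det_fin_two, h00, h11, h10] at hnn
    have : (ρ 0 1 * conj (ρ 0 1)) = ((x ^ 2 + y ^ 2 : ℝ) : ℂ) := by
      rw [Complex.mul_conj]
      norm_cast
      simp [Complex.normSq_apply, ← hx, ← hy]; ring
    rw [← Complex.ofReal_mul, this, ← Complex.ofReal_sub] at hnn
    rw [Complex.ofReal_re] at hnn
    linarith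
  have hsum : a + c = 1 := by
    rw [Matrix.trace_fin_two, h00, h11] at htr
    exact_mod_cast htr
  -- the optimal CP state σ
  have hq0 : 0 ≤ q := le_max_right x 0
  have hqac : q ^ 2 ≤ a * c := by
    have h1 : q ^ 2 ≤ x ^ 2 := by
      rcases le_total x 0 with h | h
      · rw [hqdef, max_eq_right h]; nlinarith [sq_nonneg x]
      · rw [hqdef, max_eq_left h]
    nlinarith [sq_nonneg y]
  set σ : Matrix (Fin 2) (Fin 2) ℂ := !![(a:ℂ), q; q, c] with hσ
  have hσcp : IsCPMatrix σ := cp_of_entries a q c ha hq0 hc hqac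
  have hσtr : σ.trace = 1 := by
    rw [hσ, Matrix.trace_fin_two]
    show (a : ℂ) + (c : ℂ) = 1
    exact_mod_cast congrArg (fun t : ℝ => (t : ℂ)) hsum
  have hσstate : IsCPState σ := ⟨hσcp, hσtr⟩
  set β : ℂ := ρ 0 1 - (q : ℂ) with hβ
  have hβval : β = ((min x 0 : ℝ) : ℂ) + (y : ℂ) * Complex.I := by
    apply Complex.ext
    · simp only [hβ, Complex.sub_re, Complex.ofReal_re, Complex.add_re, Complex.mul_re,
        Complex.I_re, Complex.I_im, Complex.ofReal_im]
      rw [← hx]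
      rcases le_total x 0 with h | h
      · rw [hqdef, max_eq_right h, min_eq_left h]; ring
      · rw [hqdef, max_eq_left h, min_eq_right h]; ring
    · simp [hβ, ← hy]
  have hdiff : ρ - σ = !![0, β; conj β, 0] := by
    ext i j
    fin_cases i <;> fin_cases j
    · simp [hσ, h00]
    · simp [hσ, hβ]
    · show ρ 1 0 - σ 1 0 = conj β
      rw [hβ, _root_.map_sub, Complex.conj_ofReal, h10]
      simp [hσ]
    · simp [hσ, h11]
  have hval : traceNorm (ρ - σ) = m := by
    rw [hdiff, traceNorm_offdiag, hm, hβval]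
  -- lower bound
  have lb : ∀ (σ' : Matrix (Fin 2) (Fin 2) ℂ) (l : ℝ), IsCPMatrix σ' → 0 ≤ l →
      m ≤ traceNorm (ρ - (l : ℂ) • σ') := by
    intro σ' l hcp hl
    obtain ⟨hs0, hsim, hssym⟩ := cp_entries hcp
    set A := ρ - (l : ℂ) • σ' with hA
    have hA10 : A 1 0 = conj (A 0 1) := by
      have hc1 : conj (σ' 0 1) = σ' 0 1 := Complex.conj_eq_iff_im.2 hsim
      simp only [hA, Matrix.sub_apply, Matrix.smul_apply, smul_eq_mul, _root_.map_sub,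
        _root_.map_mul, Complex.conj_ofReal, hc1]
      rw [h10, hssym]
    have h1 : 2 * ‖A 0 1‖ ≤ traceNorm A := traceNorm_lower A hA10
    have hA01 : A 0 1 = ((x - l * (σ' 0 1).re : ℝ) : ℂ) + (y : ℂ) * Complex.I := by
      apply Complex.ext
      · simp [hA, Complex.mul_re, hsim, ← hx]
      · simp [hA, Complex.mul_im, hsim, ← hy]
    have h2 : m ≤ 2 * ‖A 0 1‖ := by
      rw [hA01, hm, Complex.norm_add_mul_I, Complex.norm_add_mul_I]
      have hls : 0 ≤ l * (σ' 0 1).re := mul_nonneg hl hs0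
      have : (min x 0) ^ 2 ≤ (x - l * (σ' 0 1).re) ^ 2 := by
        rcases le_total x 0 with h | h
        · rw [min_eq_left h]; nlinarith
        · rw [min_eq_right h]; nlinarith [sq_nonneg (x - l * (σ' 0 1).re)]
      have := Real.sqrt_le_sqrt (by nlinarith : (min x 0) ^ 2 + y ^ 2 ≤ (x - l * (σ' 0 1).re) ^ 2 + y ^ 2)
      linarith
    linarith
  have hmem1 : m ∈ {t : ℝ | ∃ σ' : Matrix (Fin 2) (Fin 2) ℂ,
      IsCPState σ' ∧ t = traceNorm (ρ - σ')} := ⟨σ, hσstate, hval.symm⟩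
  have hlb1 : ∀ t ∈ {t : ℝ | ∃ σ' : Matrix (Fin 2) (Fin 2) ℂ,
      IsCPState σ' ∧ t = traceNorm (ρ - σ')}, m ≤ t := by
    rintro t ⟨σ', hst, rfl⟩
    rw [show ρ - σ' = ρ - ((1:ℝ) : ℂ) • σ' by simp]
    exact lb σ' 1 hst.1 zero_le_one
  have hmem2 : m ∈ {t : ℝ | ∃ (σ' : Matrix (Fin 2) (Fin 2) ℂ) (l : ℝ), IsCPState σ' ∧ 0 ≤ l ∧
      t = traceNorm (ρ - (l : ℂ) • σ')} :=
    ⟨σ, 1, hσstate, zero_le_one, by rw [show ρ - ((1:ℝ) : ℂ) • σ = ρ - σ by simp, hval]⟩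
  have hlb2 : ∀ t ∈ {t : ℝ | ∃ (σ' : Matrix (Fin 2) (Fin 2) ℂ) (l : ℝ), IsCPState σ' ∧ 0 ≤ l ∧
      t = traceNorm (ρ - (l : ℂ) • σ')}, m ≤ t := by
    rintro t ⟨σ', l, hst, hl, rfl⟩
    exact lb σ' l hst.1 hl
  constructor
  · rw [NtrCP]
    exact le_antisymm (csInf_le ⟨m, hlb1⟩ hmem1) (le_csInf ⟨m, hmem1⟩ hlb1)
  · rw [NtrLambdaCP]
    exact le_antisymm (csInf_le ⟨m, hlb2⟩ hmem2) (le_csInf ⟨m, hmem2⟩ hlb2)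
end CPCPPaper
end
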